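/- Let φ: S → T be a premorphism between restriction semigroups. If s ∼ t in S, then φ(s) ∼ φ(t) in T. -/

import Mathlib

/-- A (two-sided) restriction semigroup: a semigroup with unary operations
`rstar` (`x ↦ x^*`) and `rplus` (`x ↦ x^+`) satisfying the standard identities. -/
class RestrictionSemigroup (S : Type*) extends Semigroup S where
  rstar : S → S
  rplus : S → S
  rplus_mul_self : ∀ x : S, rplus x * x = x
  rplus_comm : ∀ x y : S, rplus x * rplus y = rplus y * rplus x
  rplus_rplus_mul : ∀ x y : S, rplus (rplus x * y) = rplus x * rplus y
  mul_rplus : ∀ x y : S, rplus (x * y) * x = x * rplus y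
  mul_rstar_self : ∀ x : S, x * rstar x = x
  rstar_comm : ∀ x y : S, rstar x * rstar y = rstar y * rstar x
  rstar_mul_rstar : ∀ x y : S, rstar (x * rstar y) = rstar x * rstar y
  rstar_mul : ∀ x y : S, y * rstar (x * y) = rstar x * y
  rstar_rplus : ∀ x : S, rstar (rplus x) = rplus x
  rplus_rstar : ∀ x : S, rplus (rstar x) = rstar x

open RestrictionSemigroup

/-- `e` is a projection: `e ∈ P(S) = {s^* : s ∈ S}`. -/
def IsProj {S : Type*} [RestrictionSemigroup S] (e : S) : Prop :=
  ∃ s : S, rstar s = e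

/-- The natural partial order: `s ≤ t` iff `s = t f` for some projection `f`. -/
def rle {S : Type*} [RestrictionSemigroup S] (s t : S) : Prop :=
  ∃ f : S, IsProj f ∧ s = t * f

/-- Compatibility: `s ∼ t` iff `s t^* = t s^*` and `t^+ s = s^+ t`. -/
def compat {S : Type*} [RestrictionSemigroup S] (s t : S) : Prop :=
  s * rstar t = t * rstar s ∧ rplus t * s = rplus s * t

section NaturalOrder

variable {S : Type*} [RestrictionSemigroup S]

lemma rstar_rstar (s : S) : rstar (rstar s) = rstar s := by
  simpa only [rplus_rstar] using rstar_rplus (rstar s)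

lemma IsProj.rplus_eq {e : S} (he : IsProj e) : rplus e = e := by
  obtain ⟨a, rfl⟩ := he
  exact rplus_rstar a

lemma IsProj.rstar_eq {e : S} (he : IsProj e) : rstar e = e := by
  obtain ⟨a, rfl⟩ := he
  exact rstar_rstar a

lemma IsProj.mul {e f : S} (he : IsProj e) (hf : IsProj f) : IsProj (e * f) := by
  obtain ⟨b, rfl⟩ := hf
  exact ⟨e * rstar b, by rw [rstar_mul_rstar, he.rstar_eq]⟩

lemma rle.trans {a b c : S} (hab : rle a b) (hbc : rle b c) : rle a c := by
  obtain ⟨f, hf, rfl⟩ := hab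
  obtain ⟨g, hg, rfl⟩ := hbc
  exact ⟨g * f, hg.mul hf, mul_assoc c g f⟩

lemma rle.mul_left {a b : S} (hab : rle a b) (c : S) : rle (c * a) (c * b) := by
  obtain ⟨f, hf, rfl⟩ := hab
  exact ⟨f, hf, (mul_assoc c b f).symm⟩

lemma rle.mul_right {a b : S} (hab : rle a b) (c : S) : rle (a * c) (b * c) := by
  obtain ⟨f, hf, rfl⟩ := hab
  refine ⟨rstar (f * c), ⟨f * c, rfl⟩, ?_⟩
  -- a projection `f` can be moved past `c`: `f c = c (f c)^*`
  rw [mul_assoc, mul_assoc, rstar_mul, hf.rstar_eq]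

lemma rle.eq_mul_rstar {a b : S} (hab : rle a b) : a = b * rstar a := by
  obtain ⟨f, ⟨c, rfl⟩, rfl⟩ := hab
  rw [rstar_mul_rstar, ← mul_assoc, mul_rstar_self]

lemma rle.eq_rplus_mul {a b : S} (hab : rle a b) : a = rplus a * b := by
  obtain ⟨f, hf, rfl⟩ := hab
  rw [mul_rplus, hf.rplus_eq]

lemma eq_of_rle_of_rle_of_rstar_eq {a b c : S} (hac : rle a c) (hbc : rle b c)
    (h : rstar a = rstar b) : a = b := by
  rw [hac.eq_mul_rstar, hbc.eq_mul_rstar, h]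

lemma eq_of_rle_of_rle_of_rplus_eq {a b c : S} (hac : rle a c) (hbc : rle b c)
    (h : rplus a = rplus b) : a = b := by
  rw [hac.eq_rplus_mul, hbc.eq_rplus_mul, h]

end NaturalOrder

section Premorphism

variable {S T : Type*} [RestrictionSemigroup S] [RestrictionSemigroup T] {φ : S → T}

lemma rle_mul_rstar_map (hmul : ∀ s t : S, rle (φ s * φ t) (φ (s * t)))
    (hstar : ∀ s : S, rle (rstar (φ s)) (φ (rstar s))) (u v : S) :
    rle (φ u * rstar (φ v)) (φ (u * rstar v)) :=
  ((hstar v).mul_left _).trans (hmul u _)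

lemma rle_rplus_map_mul (hmul : ∀ s t : S, rle (φ s * φ t) (φ (s * t)))
    (hplus : ∀ s : S, rle (rplus (φ s)) (φ (rplus s))) (u v : S) :
    rle (rplus (φ v) * φ u) (φ (rplus v * u)) :=
  ((hplus v).mul_right _).trans (hmul _ u)

end Premorphism

theorem stmt7 {S T : Type*} [RestrictionSemigroup S] [RestrictionSemigroup T]
    (φ : S → T)
    (hPM1 : ∀ s t : S, rle (φ s * φ t) (φ (s * t)))
    (hPM2 : ∀ s : S, rle (rstar (φ s)) (φ (rstar s)))
    (hPM3 : ∀ s : S, rle (rplus (φ s)) (φ (rplus s)))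
    (s t : S) (h : compat s t) :
    compat (φ s) (φ t) := by
  -- in each equation both sides lie below one element, `φ (s t^*) = φ (t s^*)` resp.
  -- `φ (t^+ s) = φ (s^+ t)`, and have the same projection `φ(s)^* φ(t)^*` resp. `φ(t)^+ φ(s)^+`
  constructor
  · refine eq_of_rle_of_rle_of_rstar_eq (rle_mul_rstar_map hPM1 hPM2 s t) ?_ ?_
    · rw [h.1]
      exact rle_mul_rstar_map hPM1 hPM2 t s
    · rw [rstar_mul_rstar, rstar_mul_rstar, rstar_comm]
  · refine eq_of_rle_of_rle_of_rplus_eq (rle_rplus_map_mul hPM1 hPM3 s t) ?_ ?_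
    · rw [h.2]
      exact rle_rplus_map_mul hPM1 hPM3 t s
    · rw [rplus_rplus_mul, rplus_rplus_mul, rplus_comm]
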